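/- Let m' ≥ m and n' ≥ n be positive integers. The substitution g_{i,j} ↦ g_{i,j} for -m ≤ i,j ≤ n-1, g_{i,j} ↦ 1 for i = j outside {-m,...,n-1}, g_{i,j} ↦ 0 otherwise, induces a well-defined k_q-algebra homomorphism φ^q_{(m',n',m,n)} : k_q[SL_{m',n'}] → k_q[SL_{m,n}] (in particular it sends the quantum determinant of the large generic matrix to the quantum determinant of the small one), and φ^q is a morphism of Hopf algebras: (i) (φ^q ⊗ φ^q) ∘ Δ^q_{(m',n')} = Δ^q_{(m,n)} ∘ φ^q; (ii) ε^q_{(m,n)} ∘ φ^q = ε^q_{(m',n')}; (iii) φ^q ∘ S^q_{(m',n')} = S^q_{(m,n)} ∘ φ^q. -/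

import Mathlib

set_option maxHeartbeats 2000000
set_option synthInstance.maxHeartbeats 400000

noncomputable section

open TensorProduct

/-- `k_q = k[q, q⁻¹]`, the ring of Laurent polynomials over `k`. -/
abbrev kq (k : Type) [Field k] : Type := LaurentPolynomial k

/-- The parameter `q ∈ k_q`. -/
def qParam (k : Type) [Field k] : kq k := LaurentPolynomial.T 1

/-- The inverse parameter `q⁻¹ ∈ k_q`. -/
def qInv (k : Type) [Field k] : kq k := LaurentPolynomial.T (-1)

/-- Row indices of the generic `(m+n) × m` quantum matrix: integers `-m, ..., n-1`. -/
abbrev RowI (m n : ℕ) : Type := ↥(Finset.Icc (-(m : ℤ)) ((n : ℤ) - 1))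

/-- Column indices: integers `-m, ..., -1`. -/
abbrev ColI (m : ℕ) : Type := ↥(Finset.Icc (-(m : ℤ)) (-1 : ℤ))

/-- The defining relations of a quantum matrix algebra, with rows indexed by `R` and
columns indexed by `C`. -/
inductive QMRel (k : Type) [Field k] (R C : Type) [LinearOrder R] [LinearOrder C] :
    FreeAlgebra (kq k) (R × C) → FreeAlgebra (kq k) (R × C) → Prop
  | col (i i' : R) (j : C) (h : i < i') :
      QMRel k R C (FreeAlgebra.ι (kq k) (i, j) * FreeAlgebra.ι (kq k) (i', j))
        (qInv k • (FreeAlgebra.ι (kq k) (i', j) * FreeAlgebra.ι (kq k) (i, j)))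
  | row (i : R) (j j' : C) (h : j < j') :
      QMRel k R C (FreeAlgebra.ι (kq k) (i, j) * FreeAlgebra.ι (kq k) (i, j'))
        (qInv k • (FreeAlgebra.ι (kq k) (i, j') * FreeAlgebra.ι (kq k) (i, j)))
  | comm (i i' : R) (j j' : C) (h1 : i < i') (h2 : j' < j) :
      QMRel k R C (FreeAlgebra.ι (kq k) (i, j) * FreeAlgebra.ι (kq k) (i', j'))
        (FreeAlgebra.ι (kq k) (i', j') * FreeAlgebra.ι (kq k) (i, j))
  | qcomm (i i' : R) (j j' : C) (h1 : i < i') (h2 : j < j') :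
      QMRel k R C
        (FreeAlgebra.ι (kq k) (i, j) * FreeAlgebra.ι (kq k) (i', j') -
          FreeAlgebra.ι (kq k) (i', j') * FreeAlgebra.ι (kq k) (i, j))
        ((qInv k - qParam k) • (FreeAlgebra.ι (kq k) (i', j) * FreeAlgebra.ι (kq k) (i, j')))

/-- The quantum matrix algebra with rows indexed by `R` and columns indexed by `C`. -/
abbrev QMatG (k : Type) [Field k] (R C : Type) [LinearOrder R] [LinearOrder C] : Type :=
  RingQuot (QMRel k R C)

/-- The generator `a_{r,c}` of the quantum matrix algebra. -/
def qgen (k : Type) [Field k] (R C : Type) [LinearOrder R] [LinearOrder C] (r : R) (c : C) :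
    QMatG k R C :=
  RingQuot.mkAlgHom (kq k) (QMRel k R C) (FreeAlgebra.ι (kq k) (r, c))

/-- The rectangular quantum matrix algebra `k_q[a]_{m,n}`. -/
abbrev QMat (k : Type) [Field k] (m n : ℕ) : Type := QMatG k (RowI m n) (ColI m)

/-- The generator `a_{i,j}` of `k_q[a]_{m,n}`. -/
def av (k : Type) [Field k] (m n : ℕ) (i : RowI m n) (j : ColI m) : QMat k m n :=
  qgen k (RowI m n) (ColI m) i j

/-- The number of inversions of a map between finite linearly ordered sets. -/
def inversions {a b : ℕ} (f : Fin a → Fin b) : ℕ :=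
  ((Finset.univ : Finset (Fin a × Fin a)).filter fun p => p.1 < p.2 ∧ f p.2 < f p.1).card

/-- The coefficient `(-q)^{-ℓ}`. -/
def qCoeff (k : Type) [Field k] (l : ℕ) : kq k :=
  (-1 : kq k) ^ l * LaurentPolynomial.T (-(l : ℤ))

/-- The general quantum minor on rows `row 0 < row 1 < ⋯` and columns
`col 0 < col 1 < ⋯`:
`Σ_σ (-q)^{-ℓ(σ)} a_{row 0, col (σ 0)} ⋯ a_{row (s-1), col (σ (s-1))}`. -/
def qMinorG (k : Type) [Field k] (R C : Type) [LinearOrder R] [LinearOrder C]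
    (s : ℕ) (row : Fin s → R) (col : Fin s → C) : QMatG k R C :=
  ∑ σ : Equiv.Perm (Fin s),
    qCoeff k (inversions ⇑σ) •
      (List.ofFn fun t : Fin s => qgen k R C (row t) (col (σ t))).prod

/-- The quantum minor `D_{i_0 … i_{m-1}}` of `k_q[a]_{m,n}` on the rows in `I`. -/
def qMinor (k : Type) [Field k] (m n : ℕ) (I : Finset ℤ) (hI : I.card = m)
    (hsub : I ⊆ Finset.Icc (-(m : ℤ)) ((n : ℤ) - 1)) : QMat k m n :=
  qMinorG k (RowI m n) (ColI m) m
    (fun s => ⟨I.orderEmbOfFin hI s, hsub (Finset.orderEmbOfFin_mem I hI s)⟩)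
    (fun t => ⟨-(m : ℤ) + (t : ℕ), by
      have := t.2
      simp only [Finset.mem_Icc]
      omega⟩)

/-- The quantum grassmannian `k_q[Δ_{m,n}]`: the subalgebra of `k_q[a]_{m,n}` generated
by the quantum minors. -/
def QDeltaSub (k : Type) [Field k] (m n : ℕ) : Subalgebra (kq k) (QMat k m n) :=
  Algebra.adjoin (kq k) {x | ∃ I hI hsub, x = qMinor k m n I hI hsub}

/-- The square quantum matrix algebra on the indices `-m, ..., n-1`. -/
abbrev SqMat (k : Type) [Field k] (m n : ℕ) : Type := QMatG k (RowI m n) (RowI m n)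

/-- `N = m + n`, the size of the square generic quantum matrix, as the cardinality of
the index set. -/
def NN (m n : ℕ) : ℕ := (Finset.Icc (-(m : ℤ)) ((n : ℤ) - 1)).card

/-- The quantum determinant of the generic square quantum matrix. -/
def sqDet (k : Type) [Field k] (m n : ℕ) : SqMat k m n :=
  qMinorG k (RowI m n) (RowI m n) (NN m n)
    (fun t => (Finset.Icc (-(m : ℤ)) ((n : ℤ) - 1)).orderIsoOfFin rfl t)
    (fun t => (Finset.Icc (-(m : ℤ)) ((n : ℤ) - 1)).orderIsoOfFin rfl t)

/-- The quantum special linear group ring `k_q[SL_{m,n}]`: the quotient of the square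
quantum matrix algebra by the two-sided ideal generated by `(quantum determinant) − 1`. -/
abbrev QSL (k : Type) [Field k] (m n : ℕ) : Type :=
  RingQuot (fun x y : SqMat k m n => x = sqDet k m n ∧ y = 1)

/-- The quotient map onto `k_q[SL_{m,n}]`. -/
def qslMk (k : Type) [Field k] (m n : ℕ) : SqMat k m n →ₐ[kq k] QSL k m n :=
  RingQuot.mkAlgHom (kq k) _

/-- The generator `g_{i,j}` of `k_q[SL_{m,n}]`. -/
def qgSL (k : Type) [Field k] (m n : ℕ) (i j : RowI m n) : QSL k m n :=
  qslMk k m n (qgen k (RowI m n) (RowI m n) i j)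

/-- `(-q)^z` for an integer exponent `z`. -/
def negqPow (k : Type) [Field k] (z : ℤ) : kq k :=
  (if Even z then 1 else -1) * LaurentPolynomial.T z

lemma card_erase_univ (m n : ℕ) (i : RowI m n) :
    ((Finset.univ : Finset (RowI m n)).erase i).card = NN m n - 1 := by
  simp [Finset.card_erase_of_mem, Finset.card_univ, NN]

/-- The defining property of `φ^q_{(m',n',m,n)} : k_q[SL_{m',n'}] → k_q[SL_{m,n}]`
on the generators. -/
def phiqProp (k : Type) [Field k] (m n m' n' : ℕ)
    (φ : QSL k m' n' →ₐ[kq k] QSL k m n) : Prop :=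
  ∀ i j : RowI m' n',
    φ (qgSL k m' n' i j) =
      if h : (i.1 ∈ Finset.Icc (-(m : ℤ)) ((n : ℤ) - 1)) ∧
          (j.1 ∈ Finset.Icc (-(m : ℤ)) ((n : ℤ) - 1)) then
        qgSL k m n ⟨i.1, h.1⟩ ⟨j.1, h.2⟩
      else if i.1 = j.1 then 1 else 0


/-!
The substitution turns the generic matrix into the block matrix `diag(g, 1)`, the block sitting on
the interval of labels `-m, …, n-1`. It respects the defining relations: an entry outside the
block is `0` or `1`, hence central, and because the block is an interval, the right-hand side
`(q⁻¹ - q) g_{i',j} g_{i,j'}` of the last relation vanishes as soon as one of `i, i', j, j'` lies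
outside the block.

A quantum minor whose rows and columns agree outside the block goes to the quantum minor of the
block: a permutation contributes only if it matches every outside row to the column with the same
label, and since these labels lie entirely below or above the block, it then has as many
inversions as its restriction to the block. Applied to the quantum determinant this gives `φ^q`
on `k_q[SL]`, and applied to the minors in the antipode it gives compatibility of the antipodes;
the minor omitting row `i` and column `j ≠ i` with `i` or `j` outside the block goes to `0`,
its truncation having a zero column or row. Comultiplication and counit are compared on
generators.
-/

theorem List.Sublist.prod_map_eq_of_eq_one {ι M : Type*} [Monoid M] {g : ι → M}
    {l₁ l₂ : List ι} (h : l₁.Sublist l₂) (hnd : l₂.Nodup) (hg : ∀ x ∈ l₂, x ∉ l₁ → g x = 1) :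
    (l₁.map g).prod = (l₂.map g).prod := by
  induction h with
  | slnil => rfl
  | cons a hsub ih =>
    obtain ⟨ha, hnd⟩ := List.nodup_cons.1 hnd
    rw [List.map_cons, List.prod_cons, hg a List.mem_cons_self (fun h => ha (hsub.subset h)),
      one_mul]
    exact ih hnd fun x hx => hg x (List.mem_cons_of_mem _ hx)
  | cons_cons a hsub ih =>
    obtain ⟨ha, hnd⟩ := List.nodup_cons.1 hnd
    rw [List.map_cons, List.map_cons, List.prod_cons, List.prod_cons,
      ih hnd fun x hx hx' => hg x (List.mem_cons_of_mem _ hx) (by grind)]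

theorem List.ofFn_sublist_finRange {s s' : ℕ} {e : Fin s → Fin s'} (he : StrictMono e) :
    (List.ofFn e).Sublist (List.finRange s') :=
  List.sublist_iff_exists_fin_orderEmbedding_get_eq.2
    ⟨(Fin.castOrderIso (by simp)).toOrderEmbedding.trans
      ((OrderEmbedding.ofStrictMono e he).trans (Fin.castOrderIso (by simp)).toOrderEmbedding),
      fun t => by simp [Fin.cast]⟩

theorem List.prod_ofFn_comp_of_eq_one {M : Type*} [Monoid M] {s s' : ℕ} {e : Fin s → Fin s'}
    (he : StrictMono e) {g : Fin s' → M} (hg : ∀ t, t ∉ Set.range e → g t = 1) :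
    (List.ofFn (g ∘ e)).prod = (List.ofFn g).prod := by
  rw [← List.map_ofFn, List.ofFn_eq_map (f := g)]
  exact (List.ofFn_sublist_finRange he).prod_map_eq_of_eq_one (List.nodup_finRange s')
    fun t _ ht => hg t fun ⟨a, ha⟩ => ht (List.mem_ofFn.2 ⟨a, ha⟩)

theorem inversions_eq_of_extends {s s' : ℕ} {e f : Fin s → Fin s'} (he : StrictMono e)
    (hf : StrictMono f) {π : Fin s → Fin s} {σ : Fin s' → Fin s'} (hσ : ∀ a, σ (e a) = f (π a))
    (hlt : ∀ t u, t < u → (t ∉ Set.range e ∨ u ∉ Set.range e) → σ t < σ u) :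
    inversions σ = inversions π := by
  unfold inversions
  rw [← Finset.card_image_of_injective _ (he.injective.prodMap he.injective)]
  congr 1
  ext ⟨t, u⟩
  simp only [Finset.mem_filter, Finset.mem_image, Finset.mem_univ, true_and, Prod.exists,
    Prod.map_apply, Prod.mk.injEq]
  constructor
  · rintro ⟨htu, hinv⟩
    by_cases hin : t ∈ Set.range e ∧ u ∈ Set.range e
    · obtain ⟨⟨a, rfl⟩, ⟨b, rfl⟩⟩ := hin
      rw [hσ, hσ] at hinv
      exact ⟨a, b, ⟨he.lt_iff_lt.1 htu, hf.lt_iff_lt.1 hinv⟩, rfl, rfl⟩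
    · exact absurd (hlt t u htu (not_and_or.1 hin)) (lt_asymm hinv)
  · rintro ⟨a, b, ⟨hab, hba⟩, rfl, rfl⟩
    exact ⟨he hab, by rw [hσ, hσ]; exact hf hba⟩

theorem Set.OrdConnected.lt_of_lt_of_notMem {L : Type*} [LinearOrder L] {I : Set L}
    (hI : I.OrdConnected) {a b o : L} (ha : a ∈ I) (hb : b ∈ I) (ho : o ∉ I) (h : a < o) :
    b < o :=
  lt_of_not_ge fun hob => ho (hI.out ha hb ⟨h.le, hob⟩)

theorem Set.OrdConnected.lt_of_notMem_of_lt {L : Type*} [LinearOrder L] {I : Set L}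
    (hI : I.OrdConnected) {a b o : L} (ha : a ∈ I) (hb : b ∈ I) (ho : o ∉ I) (h : o < a) :
    o < b :=
  lt_of_not_ge fun hbo => ho (hI.out hb ha ⟨hbo, h.le⟩)

theorem exists_equiv_of_range_eq {α β L : Type*} {ℓα : α → L} {ℓβ : β → L}
    (hα : Function.Injective ℓα) (hβ : Function.Injective ℓβ) (h : Set.range ℓα = Set.range ℓβ) :
    ∃ μ : α ≃ β, ∀ a, ℓβ (μ a) = ℓα a :=
  ⟨(Equiv.ofInjective ℓα hα).trans ((Equiv.setCongr h).trans (Equiv.ofInjective ℓβ hβ).symm),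
    fun a => by simp [Equiv.apply_ofInjective_symm]⟩

theorem exists_strictMono_comp_eq {L : Type*} [LinearOrder L] {s s' : ℕ} {ℓ : Fin s' → L}
    {ℓ' : Fin s → L} (hℓ : StrictMono ℓ) (hℓ' : StrictMono ℓ') (h : ∀ a, ℓ' a ∈ Set.range ℓ) :
    ∃ e : Fin s → Fin s', StrictMono e ∧ (∀ a, ℓ (e a) = ℓ' a) ∧
      ∀ t, t ∈ Set.range e ↔ ℓ t ∈ Set.range ℓ' := by
  choose e he using h
  refine ⟨e, fun a b hab => hℓ.lt_iff_lt.1 (by rw [he, he]; exact hℓ' hab), he, fun t => ?_⟩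
  constructor
  · rintro ⟨a, rfl⟩
    exact ⟨a, (he a).symm⟩
  · rintro ⟨a, ha⟩
    exact ⟨a, hℓ.injective ((he a).trans ha)⟩

section QDet

variable (k : Type) [Field k] {A : Type*} [Semiring A] [Algebra (kq k) A]

def qDet {s : ℕ} (x : Fin s → Fin s → A) : A :=
  ∑ σ : Equiv.Perm (Fin s), qCoeff k (inversions ⇑σ) • (List.ofFn fun t => x t (σ t)).prod

variable {k}

theorem qMinorG_eq_qDet {R C : Type} [LinearOrder R] [LinearOrder C] (s : ℕ) (row : Fin s → R)
    (col : Fin s → C) :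
    qMinorG k R C s row col = qDet k fun t u => qgen k R C (row t) (col u) :=
  rfl

theorem AlgHom.map_qDet {B : Type*} [Semiring B] [Algebra (kq k) B] (Ψ : A →ₐ[kq k] B) {s : ℕ}
    (x : Fin s → Fin s → A) : Ψ (qDet k x) = qDet k fun t u => Ψ (x t u) := by
  simp only [qDet, map_sum, map_smul, map_list_prod, List.map_ofFn]
  rfl

theorem qDet_eq_zero_of_row {s : ℕ} {x : Fin s → Fin s → A} (t₀ : Fin s) (h : ∀ u, x t₀ u = 0) :
    qDet k x = 0 :=
  Finset.sum_eq_zero fun σ _ => by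
    rw [List.prod_eq_zero ((List.mem_ofFn (f := fun t => x t (σ t))).2 ⟨t₀, h _⟩), smul_zero]

theorem qDet_eq_zero_of_col {s : ℕ} {x : Fin s → Fin s → A} (u₀ : Fin s) (h : ∀ t, x t u₀ = 0) :
    qDet k x = 0 :=
  Finset.sum_eq_zero fun σ _ => by
    rw [List.prod_eq_zero ((List.mem_ofFn (f := fun t => x t (σ t))).2 ⟨σ.symm u₀, by simp [h]⟩),
      smul_zero]

end QDet

section BlockReduction

variable {L : Type*} {s s' : ℕ} {e f : Fin s → Fin s'} {ℓr ℓc : Fin s' → L}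

theorem exists_perm_extension (he : Function.Injective e) (hf : Function.Injective f)
    (hr : Function.Injective ℓr) (hc : Function.Injective ℓc)
    (hlabels : ℓr '' (Set.range e)ᶜ = ℓc '' (Set.range f)ᶜ) :
    ∃ T : Equiv.Perm (Fin s) → Equiv.Perm (Fin s'), (∀ π a, T π (e a) = f (π a)) ∧
      ∀ π t, t ∉ Set.range e → ℓc (T π t) = ℓr t := by
  classical
  obtain ⟨μ, hμ⟩ := exists_equiv_of_range_eq (ℓα := fun t : ↥(Set.range e)ᶜ => ℓr t)
    (ℓβ := fun u : ↥(Set.range f)ᶜ => ℓc u) (hr.comp Subtype.val_injective)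
    (hc.comp Subtype.val_injective) (by rwa [Set.image_eq_range, Set.image_eq_range] at hlabels)
  let E := (Equiv.sumCongr (Equiv.ofInjective e he) (Equiv.refl _)).trans
    (Equiv.Set.sumCompl (Set.range e))
  let F := (Equiv.sumCongr (Equiv.ofInjective f hf) μ).trans (Equiv.Set.sumCompl (Set.range f))
  refine ⟨fun π => E.symm.trans ((Equiv.sumCongr π (Equiv.refl _)).trans F), fun π a => ?_,
    fun π t ht => ?_⟩
  · have hE : E.symm (e a) = Sum.inl a := by
      rw [Equiv.symm_apply_eq]
      simp [E]
    simp [hE, F]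
  · have hE : E.symm t = Sum.inr ⟨t, ht⟩ := by
      rw [Equiv.symm_apply_eq]
      simp [E]
    simpa [hE, F] using hμ ⟨t, ht⟩

variable {T : Equiv.Perm (Fin s) → Equiv.Perm (Fin s')}

theorem mem_range_of_forall_label_eq (he : Function.Injective e) (hc : Function.Injective ℓc)
    (hTe : ∀ π a, T π (e a) = f (π a)) (hTc : ∀ π t, t ∉ Set.range e → ℓc (T π t) = ℓr t)
    {σ : Equiv.Perm (Fin s')} (hσ : ∀ t, t ∉ Set.range e → ℓc (σ t) = ℓr t) :
    σ ∈ Set.range T := by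
  have hout : ∀ π t, t ∉ Set.range e → σ t = T π t := fun π t ht =>
    hc ((hσ t ht).trans (hTc π t ht).symm)
  have hin : ∀ a, σ (e a) ∈ Set.range f := by
    intro a
    by_contra hna
    have ht : (T 1).symm (σ (e a)) ∉ Set.range e := by
      rintro ⟨b, hb⟩
      exact hna ⟨b, by rw [← Equiv.Perm.one_apply b, ← hTe, hb, Equiv.apply_symm_apply]⟩
    have := hout 1 _ ht
    rw [Equiv.apply_symm_apply] at this
    exact ht ⟨a, (σ.injective this).symm⟩
  choose π hπ using hin
  have hπ_inj : Function.Injective π := fun a b hab =>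
    he (σ.injective (by rw [← hπ, ← hπ, hab]))
  refine ⟨Equiv.ofBijective π (Finite.injective_iff_bijective.1 hπ_inj), Equiv.ext fun t => ?_⟩
  by_cases ht : t ∈ Set.range e
  · obtain ⟨a, rfl⟩ := ht
    rw [hTe, Equiv.ofBijective_apply, hπ]
  · exact (hout _ t ht).symm

theorem inversions_perm_extension [LinearOrder L] {I : Set L} (hI : I.OrdConnected)
    (hr : StrictMono ℓr) (hc : StrictMono ℓc) (he : StrictMono e) (hf : StrictMono f)
    (he_range : ∀ t, t ∈ Set.range e ↔ ℓr t ∈ I) (hf_range : ∀ u, u ∈ Set.range f ↔ ℓc u ∈ I)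
    (hTe : ∀ π a, T π (e a) = f (π a)) (hTc : ∀ π t, t ∉ Set.range e → ℓc (T π t) = ℓr t)
    (π : Equiv.Perm (Fin s)) : inversions ⇑(T π) = inversions ⇑π := by
  refine inversions_eq_of_extends he hf (hTe π) fun t u htu hout => hc.lt_iff_lt.1 ?_
  have hlt := hr htu
  have hinI : ∀ a, ℓc (T π (e a)) ∈ I := fun a => by
    rw [hTe]; exact (hf_range _).1 ⟨_, rfl⟩
  by_cases ht : t ∈ Set.range e <;> by_cases hu : u ∈ Set.range e
  · exact absurd ⟨ht, hu⟩ (not_and_or.2 hout)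
  · obtain ⟨a, rfl⟩ := ht
    rw [hTc π u hu]
    exact hI.lt_of_lt_of_notMem ((he_range _).1 ⟨a, rfl⟩) (hinI a) (mt (he_range u).2 hu) hlt
  · obtain ⟨b, rfl⟩ := hu
    rw [hTc π t ht]
    exact hI.lt_of_notMem_of_lt ((he_range _).1 ⟨b, rfl⟩) (hinI b) (mt (he_range t).2 ht) hlt
  · rwa [hTc π t ht, hTc π u hu]

variable (k : Type) [Field k] {A : Type*} [Semiring A] [Algebra (kq k) A]

theorem qDet_eq_qDet_block [LinearOrder L] {I : Set L} (hI : I.OrdConnected)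
    (x : Fin s' → Fin s' → A) (hr : StrictMono ℓr) (hc : StrictMono ℓc) (he : StrictMono e) (hf : StrictMono f)
    (he_range : ∀ t, t ∈ Set.range e ↔ ℓr t ∈ I) (hf_range : ∀ u, u ∈ Set.range f ↔ ℓc u ∈ I)
    (hlabels : ∀ l ∉ I, l ∈ Set.range ℓr ↔ l ∈ Set.range ℓc)
    (hx : ∀ t u, ¬(ℓr t ∈ I ∧ ℓc u ∈ I) → x t u = if ℓr t = ℓc u then 1 else 0) :
    qDet k x = qDet k fun a b => x (e a) (f b) := by
  classical
  have hlabels' : ℓr '' (Set.range e)ᶜ = ℓc '' (Set.range f)ᶜ := by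
    ext l
    simp only [Set.mem_image, Set.mem_compl_iff, he_range, hf_range]
    constructor
    · rintro ⟨t, ht, rfl⟩
      obtain ⟨u, hu⟩ := (hlabels _ ht).1 ⟨t, rfl⟩
      exact ⟨u, hu ▸ ht, hu⟩
    · rintro ⟨u, hu, rfl⟩
      obtain ⟨t, ht⟩ := (hlabels _ hu).2 ⟨u, rfl⟩
      exact ⟨t, ht ▸ hu, ht⟩
  obtain ⟨T, hTe, hTc⟩ :=
    exists_perm_extension he.injective hf.injective hr.injective hc.injective hlabels'
  have hT_inj : Function.Injective T := fun π π' h =>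
    Equiv.ext fun a => hf.injective (by rw [← hTe, ← hTe, h])
  refine (Fintype.sum_of_injective T hT_inj _ _ (fun σ hσ => ?_) fun π => ?_).symm
  · by_contra hne
    refine hσ (mem_range_of_forall_label_eq he.injective hc.injective hTe hTc fun t ht => ?_)
    have hfac : x t (σ t) ≠ 0 := fun h0 =>
      hne (by rw [List.prod_eq_zero (List.mem_ofFn.2 ⟨t, h0⟩), smul_zero])
    rw [hx t (σ t) fun h => ht ((he_range t).2 h.1)] at hfac
    exact (ite_ne_right_iff.1 hfac).1.symm
  · rw [inversions_perm_extension hI hr hc he hf he_range hf_range hTe hTc π,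
      ← List.prod_ofFn_comp_of_eq_one he fun t ht => ?_]
    · simp only [Function.comp_def, hTe]
    · rw [hx t _ fun h => ht ((he_range t).2 h.1), if_pos (hTc π t ht).symm]

end BlockReduction

section QuantumMatrixRelations

variable (k : Type) [Field k] {R C : Type} [LinearOrder R] [LinearOrder C]

theorem qgen_col {i i' : R} (j : C) (h : i < i') :
    qgen k R C i j * qgen k R C i' j = qInv k • (qgen k R C i' j * qgen k R C i j) := by
  simpa only [map_mul, map_smul, qgen] using
    RingQuot.mkAlgHom_rel (kq k) (QMRel.col (k := k) i i' j h)

theorem qgen_row (i : R) {j j' : C} (h : j < j') :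
    qgen k R C i j * qgen k R C i j' = qInv k • (qgen k R C i j' * qgen k R C i j) := by
  simpa only [map_mul, map_smul, qgen] using
    RingQuot.mkAlgHom_rel (kq k) (QMRel.row (k := k) i j j' h)

theorem qgen_comm {i i' : R} {j j' : C} (h1 : i < i') (h2 : j' < j) :
    qgen k R C i j * qgen k R C i' j' = qgen k R C i' j' * qgen k R C i j := by
  simpa only [map_mul, qgen] using
    RingQuot.mkAlgHom_rel (kq k) (QMRel.comm (k := k) i i' j j' h1 h2)

theorem qgen_qcomm {i i' : R} {j j' : C} (h1 : i < i') (h2 : j < j') :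
    qgen k R C i j * qgen k R C i' j' - qgen k R C i' j' * qgen k R C i j =
      (qInv k - qParam k) • (qgen k R C i' j * qgen k R C i j') := by
  simpa only [map_mul, map_sub, map_smul, qgen] using
    RingQuot.mkAlgHom_rel (kq k) (QMRel.qcomm (k := k) i i' j j' h1 h2)

end QuantumMatrixRelations

section Truncation

variable {k : Type} [Field k] {m n m' n' : ℕ}

/-- `φ^q(g_{i,j})`, computed before passing to `k_q[SL_{m,n}]`. -/
def truncEntry (k : Type) [Field k] (m n : ℕ) {m' n' : ℕ} (i j : RowI m' n') : SqMat k m n :=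
  if h : (i.1 ∈ Finset.Icc (-(m : ℤ)) ((n : ℤ) - 1)) ∧
      (j.1 ∈ Finset.Icc (-(m : ℤ)) ((n : ℤ) - 1)) then
    qgen k (RowI m n) (RowI m n) ⟨i.1, h.1⟩ ⟨j.1, h.2⟩
  else if i.1 = j.1 then 1 else 0

theorem truncEntry_of_mem {i j : RowI m' n'} (hi : i.1 ∈ Finset.Icc (-(m : ℤ)) ((n : ℤ) - 1))
    (hj : j.1 ∈ Finset.Icc (-(m : ℤ)) ((n : ℤ) - 1)) :
    truncEntry k m n i j = qgen k (RowI m n) (RowI m n) ⟨i.1, hi⟩ ⟨j.1, hj⟩ :=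
  dif_pos ⟨hi, hj⟩

theorem truncEntry_of_not_mem {i j : RowI m' n'}
    (h : ¬(i.1 ∈ Finset.Icc (-(m : ℤ)) ((n : ℤ) - 1) ∧ j.1 ∈ Finset.Icc (-(m : ℤ)) ((n : ℤ) - 1))) :
    truncEntry k m n i j = if i.1 = j.1 then 1 else 0 :=
  dif_neg h

theorem truncEntry_of_val_eq {i j : RowI m' n'} {x y : RowI m n} (hi : i.1 = x.1)
    (hj : j.1 = y.1) : truncEntry k m n i j = qgen k (RowI m n) (RowI m n) x y := by
  rw [truncEntry_of_mem (hi ▸ x.2) (hj ▸ y.2)]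
  congr

theorem truncEntry_eq_zero {i j : RowI m' n'}
    (h : ¬(i.1 ∈ Finset.Icc (-(m : ℤ)) ((n : ℤ) - 1) ∧ j.1 ∈ Finset.Icc (-(m : ℤ)) ((n : ℤ) - 1)))
    (hij : i.1 ≠ j.1) : truncEntry k m n i j = 0 := by
  rw [truncEntry_of_not_mem h, if_neg hij]

theorem mem_or_eq_of_truncEntry_ne_zero {i j : RowI m' n'} (h : truncEntry k m n i j ≠ 0) :
    (i.1 ∈ Finset.Icc (-(m : ℤ)) ((n : ℤ) - 1) ∧ j.1 ∈ Finset.Icc (-(m : ℤ)) ((n : ℤ) - 1)) ∨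
      i.1 = j.1 := by
  rw [truncEntry] at h
  split_ifs at h with hs hij
  exacts [Or.inl hs, Or.inr hij, absurd rfl h]

theorem commute_truncEntry {i j : RowI m' n'}
    (h : ¬(i.1 ∈ Finset.Icc (-(m : ℤ)) ((n : ℤ) - 1) ∧ j.1 ∈ Finset.Icc (-(m : ℤ)) ((n : ℤ) - 1)))
    (y : SqMat k m n) : Commute (truncEntry k m n i j) y := by
  rw [truncEntry_of_not_mem h]
  split_ifs
  exacts [Commute.one_left y, Commute.zero_left y]

theorem truncEntry_col {i i' : RowI m' n'} (j : RowI m' n') (h : i < i') :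
    truncEntry k m n i j * truncEntry k m n i' j =
      qInv k • (truncEntry k m n i' j * truncEntry k m n i j) := by
  by_cases hs : i.1 ∈ Finset.Icc (-(m : ℤ)) ((n : ℤ) - 1) ∧
      i'.1 ∈ Finset.Icc (-(m : ℤ)) ((n : ℤ) - 1) ∧ j.1 ∈ Finset.Icc (-(m : ℤ)) ((n : ℤ) - 1)
  · rw [truncEntry_of_mem hs.1 hs.2.2, truncEntry_of_mem hs.2.1 hs.2.2]
    exact qgen_col k _ h
  · have hlt : i.1 < i'.1 := h
    have : truncEntry k m n i j = 0 ∨ truncEntry k m n i' j = 0 := by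
      by_contra! hne
      have h1 := mem_or_eq_of_truncEntry_ne_zero hne.1
      have h2 := mem_or_eq_of_truncEntry_ne_zero hne.2
      simp only [Finset.mem_Icc] at hs h1 h2
      omega
    rcases this with h0 | h0 <;> simp [h0]

theorem truncEntry_row (i : RowI m' n') {j j' : RowI m' n'} (h : j < j') :
    truncEntry k m n i j * truncEntry k m n i j' =
      qInv k • (truncEntry k m n i j' * truncEntry k m n i j) := by
  by_cases hs : i.1 ∈ Finset.Icc (-(m : ℤ)) ((n : ℤ) - 1) ∧
      j.1 ∈ Finset.Icc (-(m : ℤ)) ((n : ℤ) - 1) ∧ j'.1 ∈ Finset.Icc (-(m : ℤ)) ((n : ℤ) - 1)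
  · rw [truncEntry_of_mem hs.1 hs.2.1, truncEntry_of_mem hs.1 hs.2.2]
    exact qgen_row k _ h
  · have hlt : j.1 < j'.1 := h
    have : truncEntry k m n i j = 0 ∨ truncEntry k m n i j' = 0 := by
      by_contra! hne
      have h1 := mem_or_eq_of_truncEntry_ne_zero hne.1
      have h2 := mem_or_eq_of_truncEntry_ne_zero hne.2
      simp only [Finset.mem_Icc] at hs h1 h2
      omega
    rcases this with h0 | h0 <;> simp [h0]

theorem truncEntry_comm {i i' j j' : RowI m' n'} (h1 : i < i') (h2 : j' < j) :
    truncEntry k m n i j * truncEntry k m n i' j' =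
      truncEntry k m n i' j' * truncEntry k m n i j := by
  by_cases hs : (i.1 ∈ Finset.Icc (-(m : ℤ)) ((n : ℤ) - 1) ∧
      j.1 ∈ Finset.Icc (-(m : ℤ)) ((n : ℤ) - 1)) ∧ (i'.1 ∈ Finset.Icc (-(m : ℤ)) ((n : ℤ) - 1) ∧
      j'.1 ∈ Finset.Icc (-(m : ℤ)) ((n : ℤ) - 1))
  · rw [truncEntry_of_mem hs.1.1 hs.1.2, truncEntry_of_mem hs.2.1 hs.2.2]
    exact qgen_comm k h1 h2
  · rcases not_and_or.1 hs with hs | hs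
    · exact commute_truncEntry hs _
    · exact (commute_truncEntry hs _).symm

theorem truncEntry_qcomm {i i' j j' : RowI m' n'} (h1 : i < i') (h2 : j < j') :
    truncEntry k m n i j * truncEntry k m n i' j' - truncEntry k m n i' j' * truncEntry k m n i j =
      (qInv k - qParam k) • (truncEntry k m n i' j * truncEntry k m n i j') := by
  by_cases hs : (i.1 ∈ Finset.Icc (-(m : ℤ)) ((n : ℤ) - 1) ∧
      j.1 ∈ Finset.Icc (-(m : ℤ)) ((n : ℤ) - 1)) ∧ (i'.1 ∈ Finset.Icc (-(m : ℤ)) ((n : ℤ) - 1) ∧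
      j'.1 ∈ Finset.Icc (-(m : ℤ)) ((n : ℤ) - 1))
  · rw [truncEntry_of_mem hs.1.1 hs.1.2, truncEntry_of_mem hs.2.1 hs.2.2,
      truncEntry_of_mem hs.2.1 hs.1.2, truncEntry_of_mem hs.1.1 hs.2.2]
    exact qgen_qcomm k h1 h2
  · have hcomm : Commute (truncEntry k m n i j) (truncEntry k m n i' j') := by
      rcases not_and_or.1 hs with hs | hs
      · exact commute_truncEntry hs _
      · exact (commute_truncEntry hs _).symm
    -- the block of labels is an interval, so `g_{i',j}` or `g_{i,j'}` is sent to zero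
    have : truncEntry k m n i' j = 0 ∨ truncEntry k m n i j' = 0 := by
      have hlt1 : i.1 < i'.1 := h1
      have hlt2 : j.1 < j'.1 := h2
      by_contra! hne
      have h1 := mem_or_eq_of_truncEntry_ne_zero hne.1
      have h2 := mem_or_eq_of_truncEntry_ne_zero hne.2
      simp only [Finset.mem_Icc] at hs h1 h2
      omega
    rcases this with h0 | h0 <;> simp only [hcomm.eq, h0, zero_mul, mul_zero, smul_zero] <;>
      exact sub_self (G := SqMat k m n) _

theorem truncEntry_rel ⦃x y : FreeAlgebra (kq k) (RowI m' n' × RowI m' n')⦄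
    (h : QMRel k (RowI m' n') (RowI m' n') x y) :
    FreeAlgebra.lift (kq k) (Function.uncurry (truncEntry k m n)) x =
      FreeAlgebra.lift (kq k) (Function.uncurry (truncEntry k m n)) y := by
  cases h with
  | col i i' j h => simpa using truncEntry_col j h
  | row i j j' h => simpa using truncEntry_row i h
  | comm i i' j j' h1 h2 => simpa using truncEntry_comm h1 h2
  | qcomm i i' j j' h1 h2 => simpa using truncEntry_qcomm h1 h2

def truncHom (k : Type) [Field k] (m n m' n' : ℕ) : SqMat k m' n' →ₐ[kq k] SqMat k m n :=
  RingQuot.liftAlgHom (kq k)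
    ⟨FreeAlgebra.lift (kq k) (Function.uncurry (truncEntry k m n)), truncEntry_rel⟩

theorem truncHom_qgen (i j : RowI m' n') :
    truncHom k m n m' n' (qgen k (RowI m' n') (RowI m' n') i j) = truncEntry k m n i j := by
  rw [truncHom, qgen, RingQuot.liftAlgHom_mkAlgHom_apply, FreeAlgebra.lift_ι_apply]
  rfl

end Truncation

section TruncatedMinors

variable {k : Type} [Field k] {m n m' n' : ℕ}

theorem truncHom_qMinorG {s s' : ℕ} {row col : Fin s' → RowI m' n'} {rw cl : Fin s → RowI m n}
    (hrow : StrictMono row) (hcol : StrictMono col) (hrw : StrictMono rw) (hcl : StrictMono cl)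
    (hrw_range : ∀ l ∈ Finset.Icc (-(m : ℤ)) ((n : ℤ) - 1),
      (∃ t, (row t : ℤ) = l) ↔ ∃ a, (rw a : ℤ) = l)
    (hcl_range : ∀ l ∈ Finset.Icc (-(m : ℤ)) ((n : ℤ) - 1),
      (∃ u, (col u : ℤ) = l) ↔ ∃ b, (cl b : ℤ) = l)
    (hout : ∀ l ∉ Finset.Icc (-(m : ℤ)) ((n : ℤ) - 1),
      (∃ t, (row t : ℤ) = l) ↔ ∃ u, (col u : ℤ) = l) :
    truncHom k m n m' n' (qMinorG k _ _ s' row col) = qMinorG k _ _ s rw cl := by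
  have hI : (↑(Finset.Icc (-(m : ℤ)) ((n : ℤ) - 1)) : Set ℤ).OrdConnected := by
    rw [Finset.coe_Icc]
    exact Set.ordConnected_Icc
  have hrow' := (Subtype.strictMono_coe _).comp hrow
  have hcol' := (Subtype.strictMono_coe _).comp hcol
  obtain ⟨e, he, hre, he_range⟩ := exists_strictMono_comp_eq hrow'
    ((Subtype.strictMono_coe _).comp hrw) fun a => (hrw_range _ (rw a).2).2 ⟨a, rfl⟩
  obtain ⟨f, hf, hcf, hf_range⟩ := exists_strictMono_comp_eq hcol'
    ((Subtype.strictMono_coe _).comp hcl) fun b => (hcl_range _ (cl b).2).2 ⟨b, rfl⟩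
  rw [qMinorG_eq_qDet, AlgHom.map_qDet, qDet_eq_qDet_block k hI _ hrow' hcol' he hf
    (fun t => ?_) (fun u => ?_) hout fun t u h => ?_, qMinorG_eq_qDet]
  · simp only [truncHom_qgen]
    exact congrArg (qDet k) (funext₂ fun a b => truncEntry_of_val_eq (hre a) (hcf b))
  · rw [he_range]
    exact ⟨fun ⟨a, ha⟩ => ha ▸ (rw a).2, fun h => (hrw_range _ h).1 ⟨t, rfl⟩⟩
  · rw [hf_range]
    exact ⟨fun ⟨b, hb⟩ => hb ▸ (cl b).2, fun h => (hcl_range _ h).1 ⟨u, rfl⟩⟩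
  · rw [truncHom_qgen, truncEntry_of_not_mem h]
    rfl

theorem exists_orderIsoOfFin_eq_iff {α : Type*} [LinearOrder α] (S : Finset α) {c : ℕ}
    (h : S.card = c) (x : α) : (∃ t, (S.orderIsoOfFin h t : α) = x) ↔ x ∈ S :=
  ⟨fun ⟨t, ht⟩ => ht ▸ (S.orderIsoOfFin h t).2,
    fun hx => ⟨(S.orderIsoOfFin h).symm ⟨x, hx⟩, by simp⟩⟩

theorem strictMono_orderIsoOfFin_coe {α : Type*} [LinearOrder α] (S : Finset α) {c : ℕ}
    (h : S.card = c) : StrictMono fun t => (S.orderIsoOfFin h t : α) :=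
  (Subtype.strictMono_coe _).comp (S.orderIsoOfFin h).strictMono

theorem truncHom_sqDet (hmm : m ≤ m') (hnn : n ≤ n') :
    truncHom k m n m' n' (sqDet k m' n') = sqDet k m n := by
  refine truncHom_qMinorG (OrderIso.strictMono _) (OrderIso.strictMono _) (OrderIso.strictMono _)
    (OrderIso.strictMono _) (fun l hl => ?_) (fun l hl => ?_) fun l _ => Iff.rfl
  all_goals
    refine (exists_orderIsoOfFin_eq_iff _ _ l).trans
      (Iff.trans ?_ (exists_orderIsoOfFin_eq_iff _ _ l).symm)
    simp only [Finset.mem_Icc] at hl ⊢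
    omega

/-- The minor `D^{∖j}_{∖i}` of the antipode formula. -/
def qMinorOmit (k : Type) [Field k] (m n : ℕ) (i j : RowI m n) : SqMat k m n :=
  qMinorG k (RowI m n) (RowI m n) (NN m n - 1)
    (fun t => ((Finset.univ.erase i).orderIsoOfFin (card_erase_univ m n i) t).1)
    (fun t => ((Finset.univ.erase j).orderIsoOfFin (card_erase_univ m n j) t).1)

theorem exists_omit_eq_iff (i : RowI m n) (l : ℤ) :
    (∃ t, (((Finset.univ.erase i).orderIsoOfFin (card_erase_univ m n i) t : RowI m n) : ℤ) = l) ↔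
      l ∈ Finset.Icc (-(m : ℤ)) ((n : ℤ) - 1) ∧ l ≠ i := by
  constructor
  · rintro ⟨t, rfl⟩
    set y := (Finset.univ.erase i).orderIsoOfFin (card_erase_univ m n i) t
    exact ⟨y.1.2, fun h => (Finset.mem_erase.1 y.2).1 (Subtype.ext h)⟩
  · rintro ⟨hl, hli⟩
    obtain ⟨t, ht⟩ := (exists_orderIsoOfFin_eq_iff _ _ (⟨l, hl⟩ : RowI m n)).2
      (Finset.mem_erase.2 ⟨fun h => hli (congrArg Subtype.val h), Finset.mem_univ _⟩)
    exact ⟨t, congrArg Subtype.val ht⟩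

theorem truncHom_qMinorOmit_of_mem (hmm : m ≤ m') (hnn : n ≤ n') {i j : RowI m' n'}
    (hi : i.1 ∈ Finset.Icc (-(m : ℤ)) ((n : ℤ) - 1))
    (hj : j.1 ∈ Finset.Icc (-(m : ℤ)) ((n : ℤ) - 1)) :
    truncHom k m n m' n' (qMinorOmit k m' n' i j) = qMinorOmit k m n ⟨i.1, hi⟩ ⟨j.1, hj⟩ := by
  refine truncHom_qMinorG (strictMono_orderIsoOfFin_coe _ _) (strictMono_orderIsoOfFin_coe _ _)
    (strictMono_orderIsoOfFin_coe _ _) (strictMono_orderIsoOfFin_coe _ _) (fun l hl => ?_)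
    (fun l hl => ?_) fun l hl => ?_
  all_goals
    simp only [exists_omit_eq_iff, Finset.mem_Icc] at hi hj hl ⊢
    omega

theorem truncHom_qMinorOmit_self (hmm : m ≤ m') (hnn : n ≤ n') {i : RowI m' n'}
    (hi : i.1 ∉ Finset.Icc (-(m : ℤ)) ((n : ℤ) - 1)) :
    truncHom k m n m' n' (qMinorOmit k m' n' i i) = sqDet k m n := by
  refine truncHom_qMinorG (strictMono_orderIsoOfFin_coe _ _) (strictMono_orderIsoOfFin_coe _ _)
    (OrderIso.strictMono _) (OrderIso.strictMono _) (fun l hl => ?_) (fun l hl => ?_)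
    fun l _ => Iff.rfl
  all_goals
    refine (exists_omit_eq_iff i l).trans (Iff.trans ?_ (exists_orderIsoOfFin_eq_iff _ _ l).symm)
    simp only [Finset.mem_Icc] at hi hl ⊢
    omega

theorem truncHom_qMinorOmit_eq_zero {i j : RowI m' n'}
    (hs : ¬(i.1 ∈ Finset.Icc (-(m : ℤ)) ((n : ℤ) - 1) ∧ j.1 ∈ Finset.Icc (-(m : ℤ)) ((n : ℤ) - 1)))
    (hij : i ≠ j) : truncHom k m n m' n' (qMinorOmit k m' n' i j) = 0 := by
  have hij' : i.1 ≠ j.1 := fun h => hij (Subtype.ext h)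
  rw [qMinorOmit, qMinorG_eq_qDet, AlgHom.map_qDet]
  simp only [truncHom_qgen]
  rcases not_and_or.1 hs with hi | hj
  · obtain ⟨u₀, hu₀⟩ := (exists_omit_eq_iff j i.1).2 ⟨i.2, hij'⟩
    refine qDet_eq_zero_of_col u₀ fun t => truncEntry_eq_zero (fun h => hi (hu₀ ▸ h.2)) ?_
    rw [hu₀]
    exact ((exists_omit_eq_iff i _).1 ⟨t, rfl⟩).2
  · obtain ⟨t₀, ht₀⟩ := (exists_omit_eq_iff i j.1).2 ⟨j.2, hij'.symm⟩
    refine qDet_eq_zero_of_row t₀ fun u => truncEntry_eq_zero (fun h => hj (ht₀ ▸ h.1)) ?_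
    rw [ht₀]
    exact fun h => ((exists_omit_eq_iff j _).1 ⟨u, rfl⟩).2 h.symm

end TruncatedMinors

section QuantumSL

variable {k : Type} [Field k] {m n m' n' : ℕ} {A : Type*} [Semiring A] [Algebra (kq k) A]

theorem qslMk_sqDet : qslMk k m n (sqDet k m n) = 1 :=
  (RingQuot.mkAlgHom_rel _ ⟨rfl, rfl⟩).trans (map_one _)

theorem sqMat_algHom_ext {f g : SqMat k m n →ₐ[kq k] A}
    (h : ∀ i j, f (qgen k (RowI m n) (RowI m n) i j) = g (qgen k (RowI m n) (RowI m n) i j)) :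
    f = g :=
  RingQuot.ringQuot_ext' _ _ _ (FreeAlgebra.hom_ext (funext fun p => h p.1 p.2))

theorem qsl_algHom_ext {f g : QSL k m n →ₐ[kq k] A}
    (h : ∀ i j, f (qgSL k m n i j) = g (qgSL k m n i j)) : f = g :=
  RingQuot.ringQuot_ext' _ _ _ (sqMat_algHom_ext h)

theorem qsl_linearMap_ext_of_antiMul {f g : QSL k m n →ₗ[kq k] A} (hf1 : f 1 = 1) (hg1 : g 1 = 1)
    (hfm : ∀ x y, f (x * y) = f y * f x) (hgm : ∀ x y, g (x * y) = g y * g x)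
    (h : ∀ i j, f (qgSL k m n i j) = g (qgSL k m n i j)) : f = g := by
  let op := (MulOpposite.opLinearEquiv (kq k) (M := A)).toLinearMap
  have hop := qsl_algHom_ext
    (f := AlgHom.ofLinearMap (op ∘ₗ f) (by simp [op, hf1]) fun x y => by simp [op, hfm])
    (g := AlgHom.ofLinearMap (op ∘ₗ g) (by simp [op, hg1]) fun x y => by simp [op, hgm])
    fun i j => congrArg MulOpposite.op (h i j)
  ext x
  exact congrArg MulOpposite.unop (AlgHom.congr_fun hop x)

theorem qslMk_truncEntry (i j : RowI m' n') :
    qslMk k m n (truncEntry k m n i j) =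
      if h : (i.1 ∈ Finset.Icc (-(m : ℤ)) ((n : ℤ) - 1)) ∧
          (j.1 ∈ Finset.Icc (-(m : ℤ)) ((n : ℤ) - 1)) then
        qgSL k m n ⟨i.1, h.1⟩ ⟨j.1, h.2⟩
      else if i.1 = j.1 then 1 else 0 := by
  rw [truncEntry]
  split_ifs <;> simp [qgSL]

theorem phiqProp_iff (φ : QSL k m' n' →ₐ[kq k] QSL k m n) :
    phiqProp k m n m' n' φ ↔
      φ.comp (qslMk k m' n') = (qslMk k m n).comp (truncHom k m n m' n') := by
  simp only [phiqProp, ← qslMk_truncEntry]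
  constructor
  · refine fun h => sqMat_algHom_ext fun i j => ?_
    rw [AlgHom.comp_apply, AlgHom.comp_apply, truncHom_qgen]
    exact h i j
  · intro h i j
    have := AlgHom.congr_fun h (qgen k (RowI m' n') (RowI m' n') i j)
    rw [AlgHom.comp_apply, AlgHom.comp_apply, truncHom_qgen] at this
    exact this

theorem exists_phiqProp (hmm : m ≤ m') (hnn : n ≤ n') :
    ∃ φ : QSL k m' n' →ₐ[kq k] QSL k m n, phiqProp k m n m' n' φ := by
  refine ⟨RingQuot.liftAlgHom (kq k) ⟨(qslMk k m n).comp (truncHom k m n m' n'), ?_⟩,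
    (phiqProp_iff _).2 (AlgHom.ext fun x => RingQuot.liftAlgHom_mkAlgHom_apply _ _ _ _)⟩
  rintro _ _ ⟨rfl, rfl⟩
  simp [truncHom_sqDet hmm hnn, qslMk_sqDet]

variable {φ : QSL k m' n' →ₐ[kq k] QSL k m n}

theorem phiq_qgSL (hφ : φ.comp (qslMk k m' n') = (qslMk k m n).comp (truncHom k m n m' n'))
    (i j : RowI m' n') : φ (qgSL k m' n' i j) = qslMk k m n (truncEntry k m n i j) := by
  have := AlgHom.congr_fun hφ (qgen k (RowI m' n') (RowI m' n') i j)
  rw [AlgHom.comp_apply, AlgHom.comp_apply, truncHom_qgen] at this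
  exact this

theorem counit_comp_phiq (hφ : φ.comp (qslMk k m' n') = (qslMk k m n).comp (truncHom k m n m' n'))
    (ε : QSL k m n →ₐ[kq k] kq k)
    (hε : ∀ i j : RowI m n, ε (qgSL k m n i j) = if i = j then 1 else 0)
    (ε' : QSL k m' n' →ₐ[kq k] kq k)
    (hε' : ∀ i j : RowI m' n', ε' (qgSL k m' n' i j) = if i = j then 1 else 0) :
    ε.comp φ = ε' := by
  refine qsl_algHom_ext fun i j => ?_
  rw [AlgHom.comp_apply, phiq_qgSL hφ, hε']
  by_cases hs : i.1 ∈ Finset.Icc (-(m : ℤ)) ((n : ℤ) - 1) ∧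
      j.1 ∈ Finset.Icc (-(m : ℤ)) ((n : ℤ) - 1)
  · rw [truncEntry_of_mem hs.1 hs.2]
    exact (hε _ _).trans (if_congr ⟨fun h => Subtype.ext (Subtype.mk.inj h), fun h => by
      subst h; rfl⟩ rfl rfl)
  · rw [truncEntry_of_not_mem hs]
    rcases eq_or_ne i j with rfl | hij
    · simp
    · rw [if_neg (Subtype.coe_ne_coe.2 hij), if_neg hij, map_zero, map_zero]

theorem map_phiq_comp_comul (hmm : m ≤ m') (hnn : n ≤ n')
    (hφ : φ.comp (qslMk k m' n') = (qslMk k m n).comp (truncHom k m n m' n'))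
    (Δ : QSL k m n →ₐ[kq k] QSL k m n ⊗[kq k] QSL k m n)
    (hΔ : ∀ i j : RowI m n, Δ (qgSL k m n i j) =
      ∑ l : RowI m n, qgSL k m n i l ⊗ₜ[kq k] qgSL k m n l j)
    (Δ' : QSL k m' n' →ₐ[kq k] QSL k m' n' ⊗[kq k] QSL k m' n')
    (hΔ' : ∀ i j : RowI m' n', Δ' (qgSL k m' n' i j) =
      ∑ l : RowI m' n', qgSL k m' n' i l ⊗ₜ[kq k] qgSL k m' n' l j) :
    (Algebra.TensorProduct.map φ φ).comp Δ' = Δ.comp φ := by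
  refine qsl_algHom_ext fun i j => ?_
  simp only [AlgHom.comp_apply, hΔ', map_sum, Algebra.TensorProduct.map_tmul,
    phiq_qgSL hφ]
  by_cases hs : i.1 ∈ Finset.Icc (-(m : ℤ)) ((n : ℤ) - 1) ∧
      j.1 ∈ Finset.Icc (-(m : ℤ)) ((n : ℤ) - 1)
  · rw [truncEntry_of_mem hs.1 hs.2]
    let ι : RowI m n → RowI m' n' := fun l => ⟨l.1, by
      have := l.2
      simp only [Finset.mem_Icc] at this ⊢
      omega⟩
    refine (Fintype.sum_of_injective ι (fun l l' h => Subtype.ext (Subtype.mk.inj h)) _ _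
      (fun l hl => ?_) fun l => ?_).symm.trans (hΔ _ _).symm
    · have hl' : l.1 ∉ Finset.Icc (-(m : ℤ)) ((n : ℤ) - 1) := fun h => hl ⟨⟨l.1, h⟩, rfl⟩
      rw [truncEntry_eq_zero (fun h => hl' h.2) fun h => hl' (h ▸ hs.1), map_zero,
        TensorProduct.zero_tmul]
    · rw [truncEntry_of_mem (j := ι l) hs.1 l.2, truncEntry_of_mem (i := ι l) l.2 hs.2]
      rfl
  · rw [truncEntry_of_not_mem hs]
    split_ifs with hij
    · obtain rfl : i = j := Subtype.ext hij
      rw [map_one, map_one, Algebra.TensorProduct.one_def, Fintype.sum_eq_single i fun l hl => ?_,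
        truncEntry_of_not_mem hs, if_pos rfl, map_one]
      rw [truncEntry_eq_zero (fun h => hs ⟨h.1, h.1⟩) fun h => hl (Subtype.ext h.symm), map_zero,
        TensorProduct.zero_tmul]
    · rw [map_zero, map_zero]
      refine Finset.sum_eq_zero fun l _ => ?_
      have : truncEntry k m n i l = 0 ∨ truncEntry k m n l j = 0 := by
        by_contra! hne
        have h1 := mem_or_eq_of_truncEntry_ne_zero hne.1
        have h2 := mem_or_eq_of_truncEntry_ne_zero hne.2
        simp only [Finset.mem_Icc] at hs h1 h2
        omega
      rcases this with h0 | h0 <;> simp [h0]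

theorem negqPow_zero : negqPow k 0 = 1 := by
  simp [negqPow]

theorem phiq_map_antipode (hmm : m ≤ m') (hnn : n ≤ n')
    (hφ : φ.comp (qslMk k m' n') = (qslMk k m n).comp (truncHom k m n m' n'))
    (S : QSL k m n →ₗ[kq k] QSL k m n) (hS1 : S 1 = 1)
    (hSm : ∀ x y : QSL k m n, S (x * y) = S y * S x)
    (hSg : ∀ i j : RowI m n,
      S (qgSL k m n i j) = negqPow k (i.1 - j.1) • qslMk k m n (qMinorOmit k m n i j))
    (S' : QSL k m' n' →ₗ[kq k] QSL k m' n') (hS'1 : S' 1 = 1)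
    (hS'm : ∀ x y : QSL k m' n', S' (x * y) = S' y * S' x)
    (hS'g : ∀ i j : RowI m' n',
      S' (qgSL k m' n' i j) = negqPow k (i.1 - j.1) • qslMk k m' n' (qMinorOmit k m' n' i j))
    (x : QSL k m' n') : φ (S' x) = S (φ x) := by
  refine LinearMap.congr_fun (f := φ.toLinearMap ∘ₗ S') (g := S ∘ₗ φ.toLinearMap)
    (qsl_linearMap_ext_of_antiMul (by simp [hS'1]) (by simp [hS1]) (fun x y => by simp [hS'm])
      (fun x y => by simp [hSm]) fun i j => ?_) x
  have hminor := AlgHom.congr_fun hφ (qMinorOmit k m' n' i j)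
  simp only [AlgHom.comp_apply] at hminor
  simp only [LinearMap.comp_apply, AlgHom.toLinearMap_apply]
  rw [hS'g, map_smul, hminor, phiq_qgSL hφ]
  by_cases hs : i.1 ∈ Finset.Icc (-(m : ℤ)) ((n : ℤ) - 1) ∧
      j.1 ∈ Finset.Icc (-(m : ℤ)) ((n : ℤ) - 1)
  · rw [truncHom_qMinorOmit_of_mem hmm hnn hs.1 hs.2, truncEntry_of_mem hs.1 hs.2]
    exact (hSg ⟨i.1, hs.1⟩ ⟨j.1, hs.2⟩).symm
  · by_cases hij : i = j
    · subst hij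
      rw [truncHom_qMinorOmit_self hmm hnn fun h => hs ⟨h, h⟩, qslMk_sqDet,
        truncEntry_of_not_mem hs, if_pos rfl, map_one, hS1, sub_self, negqPow_zero, one_smul]
    · rw [truncHom_qMinorOmit_eq_zero hs hij,
        truncEntry_eq_zero hs fun h => hij (Subtype.ext h), map_zero, map_zero, smul_zero]

end QuantumSL

theorem stmt15_general (k : Type) [Field k] (m n m' n' : ℕ)
    (hmm : m ≤ m') (hnn : n ≤ n') :
    -- the substitution is well defined on the square quantum matrix algebra and
    -- sends the quantum determinant to the quantum determinant
    (∃ Φ : SqMat k m' n' →ₐ[kq k] SqMat k m n,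
      (∀ i j : RowI m' n',
        Φ (qgen k (RowI m' n') (RowI m' n') i j) =
          if h : (i.1 ∈ Finset.Icc (-(m : ℤ)) ((n : ℤ) - 1)) ∧
              (j.1 ∈ Finset.Icc (-(m : ℤ)) ((n : ℤ) - 1)) then
            qgen k (RowI m n) (RowI m n) ⟨i.1, h.1⟩ ⟨j.1, h.2⟩
          else if i.1 = j.1 then 1 else 0) ∧
      Φ (sqDet k m' n') = sqDet k m n) ∧
    -- hence a well-defined homomorphism φ^q between the quantum SL rings
    (∃ φ : QSL k m' n' →ₐ[kq k] QSL k m n, phiqProp k m n m' n' φ) ∧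
    -- and any such φ^q is a morphism of Hopf algebras
    (∀ (φ : QSL k m' n' →ₐ[kq k] QSL k m n), phiqProp k m n m' n' φ →
      ∀ (Δ : QSL k m n →ₐ[kq k] QSL k m n ⊗[kq k] QSL k m n),
      (∀ i j : RowI m n, Δ (qgSL k m n i j) =
        ∑ l : RowI m n, qgSL k m n i l ⊗ₜ[kq k] qgSL k m n l j) →
      ∀ (Δ' : QSL k m' n' →ₐ[kq k] QSL k m' n' ⊗[kq k] QSL k m' n'),
      (∀ i j : RowI m' n', Δ' (qgSL k m' n' i j) =
        ∑ l : RowI m' n', qgSL k m' n' i l ⊗ₜ[kq k] qgSL k m' n' l j) →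
      ∀ (ε : QSL k m n →ₐ[kq k] kq k),
      (∀ i j : RowI m n, ε (qgSL k m n i j) = if i = j then 1 else 0) →
      ∀ (ε' : QSL k m' n' →ₐ[kq k] kq k),
      (∀ i j : RowI m' n', ε' (qgSL k m' n' i j) = if i = j then 1 else 0) →
      -- the antipodes, as `k_q`-linear algebra anti-homomorphisms
      ∀ (S : QSL k m n →ₗ[kq k] QSL k m n),
      S 1 = 1 → (∀ x y : QSL k m n, S (x * y) = S y * S x) →
      (∀ i j : RowI m n, S (qgSL k m n i j) =
        negqPow k (i.1 - j.1) •
          qslMk k m n (qMinorG k (RowI m n) (RowI m n) (NN m n - 1)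
            (fun t => ((Finset.univ.erase i).orderIsoOfFin (card_erase_univ m n i) t).1)
            (fun t => ((Finset.univ.erase j).orderIsoOfFin (card_erase_univ m n j) t).1))) →
      ∀ (S' : QSL k m' n' →ₗ[kq k] QSL k m' n'),
      S' 1 = 1 → (∀ x y : QSL k m' n', S' (x * y) = S' y * S' x) →
      (∀ i j : RowI m' n', S' (qgSL k m' n' i j) =
        negqPow k (i.1 - j.1) •
          qslMk k m' n' (qMinorG k (RowI m' n') (RowI m' n') (NN m' n' - 1)
            (fun t => ((Finset.univ.erase i).orderIsoOfFin (card_erase_univ m' n' i) t).1)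
            (fun t => ((Finset.univ.erase j).orderIsoOfFin (card_erase_univ m' n' j) t).1))) →
      (Algebra.TensorProduct.map φ φ).comp Δ' = Δ.comp φ ∧
        ε.comp φ = ε' ∧
        (∀ x : QSL k m' n', φ (S' x) = S (φ x))) := by
  refine ⟨⟨truncHom k m n m' n', truncHom_qgen, truncHom_sqDet hmm hnn⟩, exists_phiqProp hmm hnn,
    fun φ hφ Δ hΔ Δ' hΔ' ε hε ε' hε' S hS1 hSm hSg S' hS'1 hS'm hS'g => ?_⟩
  have hφ' := (phiqProp_iff φ).1 hφ
  exact ⟨map_phiq_comp_comul hmm hnn hφ' Δ hΔ Δ' hΔ', counit_comp_phiq hφ' ε hε ε' hε',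
    phiq_map_antipode hmm hnn hφ' S hS1 hSm hSg S' hS'1 hS'm hS'g⟩

/-- the substitution `g_{i,j} ↦ g_{i,j}` (small range), `g_{i,i} ↦ 1`
(outside), `g_{i,j} ↦ 0` (otherwise) sends the big quantum determinant to the small one
and induces a well-defined `k_q`-algebra homomorphism
`φ^q : k_q[SL_{m',n'}] → k_q[SL_{m,n}]`, which is a morphism of Hopf algebras. -/
theorem stmt15 (k : Type) [Field k] (m n m' n' : ℕ) (hm : 0 < m) (hn : 0 < n)
    (hmm : m ≤ m') (hnn : n ≤ n') :
    -- the substitution is well defined on the square quantum matrix algebra and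
    -- sends the quantum determinant to the quantum determinant
    (∃ Φ : SqMat k m' n' →ₐ[kq k] SqMat k m n,
      (∀ i j : RowI m' n',
        Φ (qgen k (RowI m' n') (RowI m' n') i j) =
          if h : (i.1 ∈ Finset.Icc (-(m : ℤ)) ((n : ℤ) - 1)) ∧
              (j.1 ∈ Finset.Icc (-(m : ℤ)) ((n : ℤ) - 1)) then
            qgen k (RowI m n) (RowI m n) ⟨i.1, h.1⟩ ⟨j.1, h.2⟩
          else if i.1 = j.1 then 1 else 0) ∧
      Φ (sqDet k m' n') = sqDet k m n) ∧
    -- hence a well-defined homomorphism φ^q between the quantum SL rings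
    (∃ φ : QSL k m' n' →ₐ[kq k] QSL k m n, phiqProp k m n m' n' φ) ∧
    -- and any such φ^q is a morphism of Hopf algebras
    (∀ (φ : QSL k m' n' →ₐ[kq k] QSL k m n), phiqProp k m n m' n' φ →
      ∀ (Δ : QSL k m n →ₐ[kq k] QSL k m n ⊗[kq k] QSL k m n),
      (∀ i j : RowI m n, Δ (qgSL k m n i j) =
        ∑ l : RowI m n, qgSL k m n i l ⊗ₜ[kq k] qgSL k m n l j) →
      ∀ (Δ' : QSL k m' n' →ₐ[kq k] QSL k m' n' ⊗[kq k] QSL k m' n'),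
      (∀ i j : RowI m' n', Δ' (qgSL k m' n' i j) =
        ∑ l : RowI m' n', qgSL k m' n' i l ⊗ₜ[kq k] qgSL k m' n' l j) →
      ∀ (ε : QSL k m n →ₐ[kq k] kq k),
      (∀ i j : RowI m n, ε (qgSL k m n i j) = if i = j then 1 else 0) →
      ∀ (ε' : QSL k m' n' →ₐ[kq k] kq k),
      (∀ i j : RowI m' n', ε' (qgSL k m' n' i j) = if i = j then 1 else 0) →
      -- the antipodes, as `k_q`-linear algebra anti-homomorphisms
      ∀ (S : QSL k m n →ₗ[kq k] QSL k m n),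
      S 1 = 1 → (∀ x y : QSL k m n, S (x * y) = S y * S x) →
      (∀ i j : RowI m n, S (qgSL k m n i j) =
        negqPow k (i.1 - j.1) •
          qslMk k m n (qMinorG k (RowI m n) (RowI m n) (NN m n - 1)
            (fun t => ((Finset.univ.erase i).orderIsoOfFin (card_erase_univ m n i) t).1)
            (fun t => ((Finset.univ.erase j).orderIsoOfFin (card_erase_univ m n j) t).1))) →
      ∀ (S' : QSL k m' n' →ₗ[kq k] QSL k m' n'),
      S' 1 = 1 → (∀ x y : QSL k m' n', S' (x * y) = S' y * S' x) →
      (∀ i j : RowI m' n', S' (qgSL k m' n' i j) =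
        negqPow k (i.1 - j.1) •
          qslMk k m' n' (qMinorG k (RowI m' n') (RowI m' n') (NN m' n' - 1)
            (fun t => ((Finset.univ.erase i).orderIsoOfFin (card_erase_univ m' n' i) t).1)
            (fun t => ((Finset.univ.erase j).orderIsoOfFin (card_erase_univ m' n' j) t).1))) →
      (Algebra.TensorProduct.map φ φ).comp Δ' = Δ.comp φ ∧
        ε.comp φ = ε' ∧
        (∀ x : QSL k m' n', φ (S' x) = S (φ x))) :=
  stmt15_general k m n m' n' hmm hnn

end
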